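/- For any n-th primitive root of unity ζ and any non-negative integer r with 3r+2 < n suitably, z_n({3}^r; ζ) = (1/(n^2(r+1)))·(C(n+2r+1, 3r+2) + (−1)^r·C(n+r, 3r+2))·(1−ζ)^{3r}. -/

import Mathlib

/-!
Put `c = x (1 - ζ) ^ 3`. Since `[k]_ζ ^ 3 = (1 - ζ ^ k) ^ 3 / (1 - ζ) ^ 3` and
`∏_{k=1}^{n-1} (1 - ζ ^ k) = n`, the generating polynomial `∑_r z_n({3}^r; ζ) x ^ r` equals
`n⁻³ ∏_{k=1}^{n-1} f(ζ ^ k)` with `f(w) = (1 - w) ^ 3 + c w ^ 2`, and `f(1) = c`.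
If `α, β, γ` are the roots of `(w - 1) ^ 3 = c w ^ 2`, then `αβγ = 1`, so
`∏_{k=0}^{n-1} f(ζ ^ k) = ∏ (α ^ n - 1) = p_n(α, β, γ) - p_n(α⁻¹, β⁻¹, γ⁻¹)`, and the reciprocal
roots are the roots of `(w - 1) ^ 3 = -c w`. For the roots of `(w - 1) ^ 3 = c w ^ a` the power
sums obey `p_{n+3} = 3 p_{n+2} - 3 p_{n+1} + p_n + c p_{n+a}`, and Pascal's rule shows that
`p_n = 3 + ∑_{r ≥ 1} (n / r) C(n + a r - 1, 3 r - 1) c ^ r` satisfies the same recurrence.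
-/

open Finset

/-- The q-analog of a natural number: `[k]_q = (1 - q^k)/(1 - q)`. -/
noncomputable def qnum (q : ℂ) (k : ℕ) : ℂ := (1 - q ^ k) / (1 - q)

/-- Nested sum for `z_n`, recursing from the top index: the list is the
reversed tuple of exponents.  `zrev q n [s_r, …, s_1]`
`= Σ_{1 ≤ k_1 < ⋯ < k_r ≤ n} ∏ q^{(s_i-1)k_i}/[k_i]_q^{s_i}`. -/
noncomputable def zrev (q : ℂ) : ℕ → List ℕ → ℂ
  | _, [] => 1
  | n, s :: rest =>
      ∑ k ∈ Finset.Icc 1 n, q ^ ((s - 1) * k) / qnum q k ^ s * zrev q (k - 1) rest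

/-- `z n s ζ = z_n(s; ζ) = Σ_{1 ≤ k_1 < ⋯ < k_r ≤ n-1} ζ^{Σ (s_i-1)k_i} / ∏ [k_i]_ζ^{s_i}`. -/
noncomputable def z (ζ : ℂ) (n : ℕ) (s : List ℕ) : ℂ := zrev ζ (n - 1) s.reverse

open Polynomial

lemma cast_choose_succ_sub {R : Type*} [CommRing R] (m k : ℕ) :
    ((m + 1).choose (k + 1) : R) - m.choose (k + 1) = m.choose k := by
  rw [Nat.choose_succ_succ', Nat.cast_add]; ring

lemma cast_choose_third_difference {R : Type*} [CommRing R] (m k : ℕ) :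
    ((m + 3).choose (k + 3) : R) - 3 * (m + 2).choose (k + 3) + 3 * (m + 1).choose (k + 3)
      - m.choose (k + 3) = m.choose k := by
  linear_combination cast_choose_succ_sub (R := R) (m + 2) (k + 2)
    - 2 * cast_choose_succ_sub (R := R) (m + 1) (k + 2) + cast_choose_succ_sub (R := R) m (k + 2)
    + cast_choose_succ_sub (R := R) (m + 1) (k + 1) - cast_choose_succ_sub (R := R) m (k + 1)
    + cast_choose_succ_sub (R := R) m k

lemma cast_choose_two_third_difference {R : Type*} [CommRing R] (m : ℕ) :
    ((m + 3).choose 2 : R) - 3 * (m + 2).choose 2 + 3 * (m + 1).choose 2 - m.choose 2 = 0 := by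
  linear_combination cast_choose_succ_sub (R := R) (m + 2) 1
    - 2 * cast_choose_succ_sub (R := R) (m + 1) 1 + cast_choose_succ_sub (R := R) m 1
    + cast_choose_succ_sub (R := R) (m + 1) 0 - cast_choose_succ_sub (R := R) m 0
    + (by simp : ((m + 1).choose 0 : R) = 1) - (by simp : (m.choose 0 : R) = 1)

lemma cast_succ_mul_choose_succ {R : Type*} [CommRing R] (N k : ℕ) :
    ((k + 1 : ℕ) : R) * N.choose (k + 1) = ((N : R) - k) * N.choose k := by
  rcases le_or_gt k N with h | h
  · have := congrArg (Nat.cast : ℕ → R) (Nat.choose_succ_right_eq N k)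
    push_cast [Nat.cast_sub h] at this ⊢
    linear_combination this
  · rw [Nat.choose_eq_zero_of_lt h, Nat.choose_eq_zero_of_lt (by omega)]; simp

/-- The coefficient of `c ^ r` in the `n`-th power sum of the roots of `(w - 1) ^ 3 = c * w ^ a`.
For `r ≥ 1` it is `(n / r) * C(n + a r - 1, 3 r - 1)` (`succ_mul_cubicPowerSumCoeff`); the form
below is the one to which Pascal's rule applies. -/
noncomputable def cubicPowerSumCoeff (a n : ℕ) : ℕ → ℂ
  | 0 => 3
  | r + 1 => 3 * (n + a * (r + 1) - 1).choose (3 * r + 3)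
      + (3 - a) * (n + a * (r + 1) - 1).choose (3 * r + 2)

lemma cubicPowerSumCoeff_eq_zero {a n r : ℕ} (ha : a ≤ 2) (hr : n < r) :
    cubicPowerSumCoeff a n r = 0 := by
  obtain ⟨r, rfl⟩ : ∃ s, r = s + 1 := ⟨r - 1, by omega⟩
  have : a * (r + 1) ≤ 2 * (r + 1) := Nat.mul_le_mul_right _ ha
  rw [cubicPowerSumCoeff, Nat.choose_eq_zero_of_lt (by omega),
    Nat.choose_eq_zero_of_lt (by omega)]
  simp

lemma succ_mul_cubicPowerSumCoeff {a : ℕ} (ha : 1 ≤ a) (n r : ℕ) :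
    (r + 1 : ℂ) * cubicPowerSumCoeff a n (r + 1)
      = n * (n + a * (r + 1) - 1).choose (3 * r + 2) := by
  have h := cast_succ_mul_choose_succ (R := ℂ) (n + a * (r + 1) - 1) (3 * r + 2)
  have : 1 ≤ a * (r + 1) := Nat.one_le_iff_ne_zero.mpr (by positivity)
  push_cast [Nat.cast_sub (by omega : 1 ≤ n + a * (r + 1))] at h ⊢
  rw [cubicPowerSumCoeff]
  linear_combination h

lemma cubicPowerSumCoeff_add_three {a : ℕ} (ha : 1 ≤ a) (n r : ℕ) :
    cubicPowerSumCoeff a (n + 3) (r + 1) - 3 * cubicPowerSumCoeff a (n + 2) (r + 1)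
      + 3 * cubicPowerSumCoeff a (n + 1) (r + 1) - cubicPowerSumCoeff a n (r + 1)
      = cubicPowerSumCoeff a (n + a) r := by
  have : 1 ≤ a * (r + 1) := Nat.one_le_iff_ne_zero.mpr (by positivity)
  obtain ⟨M, hM⟩ : ∃ M, n + a * (r + 1) - 1 = M := ⟨_, rfl⟩
  have h1 : n + 1 + a * (r + 1) - 1 = M + 1 := by omega
  have h2 : n + 2 + a * (r + 1) - 1 = M + 2 := by omega
  have h3 : n + 3 + a * (r + 1) - 1 = M + 3 := by omega
  simp only [cubicPowerSumCoeff, h1, h2, h3, hM]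
  rcases r with _ | r
  · linear_combination 3 * cast_choose_third_difference (R := ℂ) M 0
      + (3 - a : ℂ) * cast_choose_two_third_difference (R := ℂ) M
      + 3 * (by simp : (M.choose 0 : ℂ) = 1)
  · have hM' : n + a + a * (r + 1) - 1 = M := by rw [← hM]; ring_nf
    simp only [hM']
    linear_combination 3 * cast_choose_third_difference (R := ℂ) M (3 * r + 3)
      + (3 - a : ℂ) * cast_choose_third_difference (R := ℂ) M (3 * r + 2)

noncomputable def cubicPowerSumPoly (a n : ℕ) : ℂ[X] :=
  ∑ r ∈ range (n + 1), C (cubicPowerSumCoeff a n r) * X ^ r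

lemma coeff_cubicPowerSumPoly {a : ℕ} (ha : a ≤ 2) (n r : ℕ) :
    (cubicPowerSumPoly a n).coeff r = cubicPowerSumCoeff a n r := by
  simp only [cubicPowerSumPoly, finsetSum_coeff, coeff_C_mul_X_pow, sum_ite_eq, mem_range]
  split_ifs with h
  · rfl
  · exact (cubicPowerSumCoeff_eq_zero ha (by omega)).symm

lemma cubicPowerSumPoly_add_three {a : ℕ} (ha₁ : 1 ≤ a) (ha₂ : a ≤ 2) (n : ℕ) :
    cubicPowerSumPoly a (n + 3) = 3 * cubicPowerSumPoly a (n + 2) - 3 * cubicPowerSumPoly a (n + 1)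
      + cubicPowerSumPoly a n + X * cubicPowerSumPoly a (n + a) := by
  ext r
  rcases r with _ | r
  · simp [coeff_cubicPowerSumPoly ha₂, cubicPowerSumCoeff]
  · have := cubicPowerSumCoeff_add_three ha₁ n r
    simp only [coeff_add, coeff_sub, coeff_X_mul, coeff_ofNat_mul, coeff_cubicPowerSumPoly ha₂]
    linear_combination this

lemma exists_cubic_roots {K : Type*} [Field K] [IsAlgClosed K] (p q s : K) :
    ∃ α β γ : K, ∀ w, w ^ 3 + p * w ^ 2 + q * w + s = (w - α) * (w - β) * (w - γ) := by
  set f : K[X] := X ^ 3 + C p * X ^ 2 + C q * X + C s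
  have hmonic : f.Monic := by unfold f; monicity!
  have hdeg : f.natDegree = 3 := by unfold f; compute_degree!
  have hsplit : f.Splits := IsAlgClosed.splits f
  obtain ⟨α, β, γ, hroots⟩ : ∃ α β γ, f.roots = {α, β, γ} := by
    rw [← Multiset.card_eq_three, splits_iff_card_roots.mp hsplit, hdeg]
  refine ⟨α, β, γ, fun w => ?_⟩
  have := congrArg (eval w) (hsplit.eq_prod_roots_of_monic hmonic)
  simp only [hroots, f] at this
  simpa [mul_assoc] using this

lemma cubic_vieta {K : Type*} [Field K] [CharZero K] {p q s α β γ : K}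
    (h : ∀ w, w ^ 3 + p * w ^ 2 + q * w + s = (w - α) * (w - β) * (w - γ)) :
    α + β + γ = -p ∧ α * β + β * γ + γ * α = q ∧ α * β * γ = -s := by
  have h₀ := h 0
  have h₁ := h 1
  have h₂ := h (-1)
  refine ⟨?_, ?_, ?_⟩
  · linear_combination (h₁ + h₂) / 2 - h₀
  · linear_combination (h₂ - h₁) / 2
  · linear_combination h₀

lemma vieta_sub_one_cube_sub_mul_pow {a : ℕ} (ha : a = 1 ∨ a = 2) {c α β γ : ℂ}
    (h : ∀ w, (w - 1) ^ 3 - c * w ^ a = (w - α) * (w - β) * (w - γ)) :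
    α + β + γ = 3 + (a - 1 : ℂ) * c ∧ α * β + β * γ + γ * α = 3 - (2 - a : ℂ) * c
      ∧ α * β * γ = 1 := by
  rcases ha with rfl | rfl
  · obtain ⟨e₁, e₂, e₃⟩ := cubic_vieta (p := -3) (q := 3 - c) (s := -1)
      (α := α) (β := β) (γ := γ) fun w => by linear_combination h w
    exact ⟨by linear_combination e₁, by linear_combination e₂, by linear_combination e₃⟩
  · obtain ⟨e₁, e₂, e₃⟩ := cubic_vieta (p := -(3 + c)) (q := 3) (s := -1)
      (α := α) (β := β) (γ := γ) fun w => by linear_combination h w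
    exact ⟨by linear_combination e₁, by linear_combination e₂, by linear_combination e₃⟩

lemma sum_pow_roots_eq_eval_cubicPowerSumPoly {a : ℕ} (ha : a = 1 ∨ a = 2) {c α β γ : ℂ}
    (h : ∀ w, (w - 1) ^ 3 - c * w ^ a = (w - α) * (w - β) * (w - γ)) (n : ℕ) :
    α ^ n + β ^ n + γ ^ n = (cubicPowerSumPoly a n).eval c := by
  obtain ⟨e₁, e₂, -⟩ := vieta_sub_one_cube_sub_mul_pow ha h
  induction n using Nat.strong_induction_on with
  | _ n ih =>
    match n, ih with
    | 0, _ => norm_num [cubicPowerSumPoly, cubicPowerSumCoeff]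
    | 1, _ =>
      rcases ha with rfl | rfl <;>
        norm_num [cubicPowerSumPoly, cubicPowerSumCoeff, sum_range_succ, Nat.choose] at e₁ ⊢ <;>
        linear_combination e₁
    | 2, _ =>
      rcases ha with rfl | rfl <;>
        norm_num [cubicPowerSumPoly, cubicPowerSumCoeff, sum_range_succ, Nat.choose]
          at e₁ e₂ ⊢
      · linear_combination (α + β + γ + 3) * e₁ - 2 * e₂
      · linear_combination (α + β + γ + 3 + c) * e₁ - 2 * e₂
    | n + 3, ih =>
      have ha₁ : 1 ≤ a := by omega
      have ha₂ : a ≤ 2 := by omega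
      rw [cubicPowerSumPoly_add_three ha₁ ha₂]
      simp only [eval_add, eval_sub, eval_mul, eval_X, eval_ofNat]
      rw [← ih n (by omega), ← ih (n + 1) (by omega), ← ih (n + 2) (by omega),
        ← ih (n + a) (by omega)]
      linear_combination α ^ n * h α + β ^ n * h β + γ ^ n * h γ

lemma IsPrimitiveRoot.prod_range_sub_pow {R : Type*} [CommRing R] [IsDomain R] {ζ : R} {n : ℕ}
    (hζ : IsPrimitiveRoot ζ n) (hn : 0 < n) (w : R) :
    ∏ k ∈ range n, (w - ζ ^ k) = w ^ n - 1 := by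
  simpa [eval_prod] using (congrArg (eval w) (X_pow_sub_C_eq_prod hζ hn (one_pow n))).symm

lemma IsPrimitiveRoot.prod_range_cubic_eq {ζ : ℂ} {n : ℕ} (hζ : IsPrimitiveRoot ζ n)
    (hn : 0 < n) (c : ℂ) :
    ∏ k ∈ range n, ((1 - ζ ^ k) ^ 3 + c * ζ ^ (2 * k))
      = (cubicPowerSumPoly 2 n).eval c - (cubicPowerSumPoly 1 n).eval (-c) := by
  obtain ⟨α, β, γ, h⟩ := exists_cubic_roots (-(3 + c)) 3 (-1)
  have h₂ : ∀ w, (w - 1) ^ 3 - c * w ^ 2 = (w - α) * (w - β) * (w - γ) :=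
    fun w => by linear_combination h w
  obtain ⟨e₁, e₂, e₃⟩ := vieta_sub_one_cube_sub_mul_pow (Or.inr rfl) h₂
  -- the reciprocal roots, since `αβγ = 1`
  have h₁ : ∀ w, (w - 1) ^ 3 - (-c) * w ^ 1 = (w - β * γ) * (w - γ * α) * (w - α * β) :=
    fun w => by
      linear_combination
        w ^ 2 * e₂ - w * α * β * γ * e₁ - (w * (3 + c) - α * β * γ - 1) * e₃
  have hfactor : ∀ k,
      (1 - ζ ^ k) ^ 3 + c * ζ ^ (2 * k) = (α - ζ ^ k) * (β - ζ ^ k) * (γ - ζ ^ k) :=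
    fun k => by linear_combination -h₂ (ζ ^ k)
  simp only [hfactor, prod_mul_distrib, hζ.prod_range_sub_pow hn]
  rw [← sum_pow_roots_eq_eval_cubicPowerSumPoly (Or.inr rfl) h₂,
    ← sum_pow_roots_eq_eval_cubicPowerSumPoly (Or.inl rfl) h₁]
  have hprod : (α * β * γ) ^ n = 1 := by rw [e₃]; norm_num
  linear_combination hprod

lemma zrev_succ_cons (q : ℂ) (m s : ℕ) (l : List ℕ) :
    zrev q (m + 1) (s :: l)
      = zrev q m (s :: l) + q ^ ((s - 1) * (m + 1)) / qnum q (m + 1) ^ s * zrev q m l := by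
  simp only [zrev]
  rw [sum_Icc_succ_top (by omega), Nat.add_sub_cancel]

lemma coeff_prod_one_add_C_mul_X (q : ℂ) (s m r : ℕ) :
    (∏ k ∈ range m, (1 + C (q ^ ((s - 1) * (k + 1)) / qnum q (k + 1) ^ s) * X)).coeff r
      = zrev q m (List.replicate r s) := by
  induction m generalizing r with
  | zero => rcases r with _ | r <;> simp [zrev, coeff_one, List.replicate_succ]
  | succ m ih =>
    rw [prod_range_succ, mul_add, mul_one, ← mul_assoc, coeff_add]
    rcases r with _ | r
    · simp [ih, zrev]
    · rw [coeff_mul_X, coeff_mul_C, ih, ih, List.replicate_succ, zrev_succ_cons]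
      ring

lemma IsPrimitiveRoot.C_mul_X_mul_prod_eq_comp_sub_comp {ζ : ℂ} {m : ℕ}
    (hζ : IsPrimitiveRoot ζ (m + 1)) :
    C ((m + 1) ^ 3 * (1 - ζ) ^ 3) * X
        * ∏ k ∈ range m, (1 + C (ζ ^ ((3 - 1) * (k + 1)) / qnum ζ (k + 1) ^ 3) * X)
      = (cubicPowerSumPoly 2 (m + 1)).comp (C ((1 - ζ) ^ 3) * X)
        - (cubicPowerSumPoly 1 (m + 1)).comp (C (-(1 - ζ) ^ 3) * X) := by
  refine Polynomial.funext fun x => ?_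
  have hfactor : ∀ k ∈ range m, (1 - ζ ^ (k + 1)) ^ 3 + (1 - ζ) ^ 3 * x * ζ ^ (2 * (k + 1))
      = (1 - ζ ^ (k + 1)) ^ 3 * (1 + ζ ^ ((3 - 1) * (k + 1)) / qnum ζ (k + 1) ^ 3 * x) := by
    intro k hk
    have hk' : 1 - ζ ^ (k + 1) ≠ 0 :=
      sub_ne_zero.mpr (hζ.pow_ne_one_of_pos_of_lt (by omega) (by simp at hk; omega)).symm
    have hζ₁ : 1 - ζ ≠ 0 := sub_ne_zero.mpr (hζ.ne_one (by simp at hk; omega)).symm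
    simp only [qnum]
    field_simp
  have hprod := hζ.prod_range_cubic_eq m.succ_pos ((1 - ζ) ^ 3 * x)
  rw [prod_range_succ', prod_congr rfl hfactor, prod_mul_distrib, prod_pow,
    hζ.prod_one_sub_pow_eq_order] at hprod
  simp only [eval_mul, eval_C, eval_X, eval_sub, eval_comp, eval_prod, eval_add, eval_one]
  rw [neg_mul, ← hprod, pow_zero, sub_self]
  ring

lemma IsPrimitiveRoot.cube_mul_zrev_replicate_three {ζ : ℂ} {m : ℕ}
    (hζ : IsPrimitiveRoot ζ (m + 1)) (r : ℕ) :
    (m + 1) ^ 3 * (1 - ζ) ^ 3 * zrev ζ m (List.replicate r 3)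
      = cubicPowerSumCoeff 2 (m + 1) (r + 1) * ((1 - ζ) ^ 3) ^ (r + 1)
        - cubicPowerSumCoeff 1 (m + 1) (r + 1) * (-(1 - ζ) ^ 3) ^ (r + 1) := by
  have h := congrArg (coeff · (r + 1)) hζ.C_mul_X_mul_prod_eq_comp_sub_comp
  simpa only [mul_assoc, coeff_C_mul, coeff_X_mul, coeff_prod_one_add_C_mul_X, coeff_sub,
    comp_C_mul_X_coeff, coeff_cubicPowerSumPoly (by norm_num : 2 ≤ 2),
    coeff_cubicPowerSumPoly (by norm_num : 1 ≤ 2)] using h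

theorem stmt6 (n r : ℕ) (hn : 3 * r + 2 < n) (ζ : ℂ) (hζ : IsPrimitiveRoot ζ n) :
    z ζ n (List.replicate r 3)
      = (1 / ((n : ℂ) ^ 2 * (r + 1)))
          * (((n + 2 * r + 1).choose (3 * r + 2) : ℂ)
              + (-1) ^ r * ((n + r).choose (3 * r + 2) : ℂ))
          * (1 - ζ) ^ (3 * r) := by
  obtain ⟨m, rfl⟩ : ∃ m, n = m + 1 := ⟨n - 1, by omega⟩
  have hζ₁ : 1 - ζ ≠ 0 := sub_ne_zero.mpr (hζ.ne_one (by omega)).symm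
  have key := hζ.cube_mul_zrev_replicate_three r
  have h₂ := succ_mul_cubicPowerSumCoeff (a := 2) (by norm_num) (m + 1) r
  have h₁ := succ_mul_cubicPowerSumCoeff (a := 1) le_rfl (m + 1) r
  rw [show m + 1 + 2 * (r + 1) - 1 = m + 1 + 2 * r + 1 by omega] at h₂
  rw [show m + 1 + 1 * (r + 1) - 1 = m + 1 + r by omega] at h₁
  rw [z, List.reverse_replicate, Nat.add_sub_cancel]
  push_cast at h₁ h₂ ⊢
  have hm : (m + 1 : ℂ) ≠ 0 := Nat.cast_add_one_ne_zero m
  have hr : (r + 1 : ℂ) ≠ 0 := Nat.cast_add_one_ne_zero r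
  field_simp
  apply mul_left_cancel₀ (mul_ne_zero hm (pow_ne_zero 3 hζ₁))
  rw [pow_mul]
  rw [neg_pow] at key
  generalize (1 - ζ) ^ 3 = b at key ⊢
  linear_combination (r + 1 : ℂ) * key + b ^ (r + 1) * h₂ - (-1) ^ (r + 1) * b ^ (r + 1) * h₁
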